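/- Let λ1 ≥ λ2 ≥ λ3 > 0 with λ1 + λ2 + λ3 = 1 (rank-3 MEMS ρ_λ = λ1 Φ1 + λ2 |01⟩⟨01| + λ3 Φ2), and let σ = p1 Φ1 + p2 Φ2 + p3 Φ3 + p4 Φ4 be any Bell-diagonal two-qubit density matrix of rank 3 (i.e., exactly one of p1, p2, p3, p4 is zero and the other three are strictly positive) that is not separable. Then there exists no SEP map Λ satisfying Λ(ρ_λ) = σ. -/
import Mathlib


open Matrix Kronecker Polynomial
open scoped ComplexOrder

noncomputable section

/-- Index set for two qubits: ℂ²⊗ℂ² ≅ ℂ⁴ with basis |00⟩,|01⟩,|10⟩,|11⟩. -/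
abbrev Q2 : Type := Fin 2 × Fin 2
abbrev Mat2 : Type := Matrix (Fin 2) (Fin 2) ℂ
abbrev Mat4 : Type := Matrix Q2 Q2 ℂ
abbrev Vec4 : Type := Q2 → ℂ

/-- Computational basis vector |ij⟩. -/
def ket (i j : Fin 2) : Vec4 := fun p => if p = (i, j) then 1 else 0

/-- The rank-one matrix |ψ⟩⟨φ|. -/
def ketBra (ψ φ : Vec4) : Mat4 := fun p q => ψ p * star (φ q)

/-- The four Bell vectors |Φ1⟩,…,|Φ4⟩. -/
def bell : Fin 4 → Vec4 :=
  ![(Real.sqrt 2 : ℂ)⁻¹ • (ket 0 0 + ket 1 1),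
    (Real.sqrt 2 : ℂ)⁻¹ • (ket 0 0 - ket 1 1),
    (Real.sqrt 2 : ℂ)⁻¹ • (ket 1 0 + ket 0 1),
    (Real.sqrt 2 : ℂ)⁻¹ • (ket 1 0 - ket 0 1)]

/-- Bell projectors Φ_i = |Φ_i⟩⟨Φ_i|. -/
def bellProj (i : Fin 4) : Mat4 := ketBra (bell i) (bell i)

/-- A two-qubit density matrix: Hermitian positive semidefinite with trace one. -/
def IsDensity (ρ : Mat4) : Prop := ρ.PosSemidef ∧ ρ.trace = 1

/-- Unit vector in ℂ². -/
def IsUnitVec (u : Fin 2 → ℂ) : Prop := ∑ x, Complex.normSq (u x) = 1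

/-- Separable two-qubit density matrix: convex mixture of products of pure states. -/
def SepState (ρ : Mat4) : Prop :=
  ∃ (n : ℕ) (p : Fin n → ℝ) (u v : Fin n → Fin 2 → ℂ),
    (∀ i, 0 ≤ p i) ∧ (∑ i, p i = 1) ∧
    (∀ i, IsUnitVec (u i)) ∧ (∀ i, IsUnitVec (v i)) ∧
    ρ = ∑ i, (p i : ℂ) • (vecMulVec (u i) (star (u i)) ⊗ₖ vecMulVec (v i) (star (v i)))

/-- A SEP map: Kraus operators in product form, trace preserving. -/
def IsSEP (T : Mat4 → Mat4) : Prop :=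
  ∃ (k : ℕ) (A B : Fin k → Mat2),
    (∑ i, (A i ⊗ₖ B i)ᴴ * (A i ⊗ₖ B i) = 1) ∧
    ∀ X, T X = ∑ i, (A i ⊗ₖ B i) * X * (A i ⊗ₖ B i)ᴴ

/-- CPTP map in Kraus form. -/
def IsCPTP (T : Mat4 → Mat4) : Prop :=
  ∃ (k : ℕ) (K : Fin k → Mat4),
    (∑ i, (K i)ᴴ * K i = 1) ∧ ∀ X, T X = ∑ i, K i * X * (K i)ᴴ

/-- Non-entangling (NE) map: CPTP and maps separable states to separable states. -/
def IsNE (T : Mat4 → Mat4) : Prop :=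
  IsCPTP T ∧ ∀ ρ, SepState ρ → SepState (T ρ)

/-- The MEMS state ρ_λ = λ1 Φ1 + λ2 |01⟩⟨01| + λ3 Φ2 + λ4 |10⟩⟨10|. -/
def mems (l1 l2 l3 l4 : ℝ) : Mat4 :=
  (l1 : ℂ) • bellProj 0 + (l2 : ℂ) • ketBra (ket 0 1) (ket 0 1) +
  (l3 : ℂ) • bellProj 1 + (l4 : ℂ) • ketBra (ket 1 0) (ket 1 0)

/-- The Bell-diagonal state σ_λ = λ1 Φ1 + λ2 Φ2 + λ3 Φ3 + λ4 Φ4. -/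
def bdiag (l1 l2 l3 l4 : ℝ) : Mat4 :=
  (l1 : ℂ) • bellProj 0 + (l2 : ℂ) • bellProj 1 + (l3 : ℂ) • bellProj 2 + (l4 : ℂ) • bellProj 3

/-- The normalized vector |Φ1(ε)⟩ = (|Φ1⟩ + ε|10⟩)/√(1+ε²). -/
def phi1eps (ε : ℝ) : Vec4 :=
  (Real.sqrt (1 + ε ^ 2) : ℂ)⁻¹ • (bell 0 + (ε : ℂ) • ket 1 0)

/-! ### Auxiliary material for the proof -/

/-- product vector x ⊗ y -/
def tp (x y : Fin 2 → ℂ) : Vec4 := fun p => x p.1 * y p.2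

lemma s_ne : ((Real.sqrt 2 : ℂ))⁻¹ ≠ 0 := by
  simp [Complex.ofReal_eq_zero, Real.sqrt_eq_zero']

lemma s_mul_s : ((Real.sqrt 2 : ℂ))⁻¹ * ((Real.sqrt 2 : ℂ))⁻¹ = 2⁻¹ := by
  rw [← mul_inv, ← Complex.ofReal_mul, Real.mul_self_sqrt (by norm_num)]
  norm_num

lemma star_s : star ((Real.sqrt 2 : ℂ))⁻¹ = ((Real.sqrt 2 : ℂ))⁻¹ := by
  rw [star_inv₀, Complex.star_def, Complex.conj_ofReal]

lemma bell_ortho (j k : Fin 4) : star (bell j) ⬝ᵥ bell k = if j = k then 1 else 0 := by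
  fin_cases j <;> fin_cases k <;>
    simp [bell, ket, dotProduct, Fintype.sum_prod_type, Fin.sum_univ_two,
      Pi.star_apply, star_s, Prod.ext_iff] <;>
    rw [s_mul_s] <;> ring

lemma ketBra_mulVec (ψ φ w : Vec4) : ketBra ψ φ *ᵥ w = (star φ ⬝ᵥ w) • ψ := by
  ext p
  simp only [ketBra, mulVec, dotProduct, Pi.smul_apply, smul_eq_mul, Finset.mul_sum,
    Pi.star_apply, Finset.sum_mul]
  exact Finset.sum_congr rfl (fun q _ => by ring)

lemma mul_ketBra_mul (M : Mat4) (x y : Vec4) :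
    M * ketBra x y * Mᴴ = ketBra (M *ᵥ x) (M *ᵥ y) := by
  ext p q
  simp only [Matrix.mul_apply, ketBra, conjTranspose_apply, mulVec, dotProduct,
    Finset.sum_mul, Finset.mul_sum, star_sum, star_mul']
  refine Finset.sum_congr rfl fun a _ => Finset.sum_congr rfl fun b _ => by
    simp only [Complex.star_def, Complex.conj_conj]; ring

lemma conj_dot (w x : Vec4) : star x ⬝ᵥ w = (starRingEnd ℂ) (star w ⬝ᵥ x) := by
  simp only [dotProduct, map_sum, _root_.map_mul, Pi.star_apply, Complex.star_def,
    Complex.conj_conj]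
  exact Finset.sum_congr rfl fun a _ => mul_comm _ _

lemma dot_ketBra (w x : Vec4) :
    star w ⬝ᵥ (ketBra x x *ᵥ w) = (Complex.normSq (star w ⬝ᵥ x) : ℂ) := by
  rw [ketBra_mulVec, dotProduct_smul, conj_dot, smul_eq_mul, mul_comm, Complex.mul_conj]

lemma kron_mulVec_ket (A B : Mat2) (i j : Fin 2) :
    (A ⊗ₖ B) *ᵥ ket i j = tp (fun p => A p i) (fun q => B q j) := by
  ext ⟨p, q⟩
  simp only [mulVec, dotProduct, Fintype.sum_prod_type, ket, Prod.ext_iff, tp,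
    kroneckerMap_apply, Fin.sum_univ_two, mul_ite, mul_one, mul_zero]
  fin_cases i <;> fin_cases j <;> simp

lemma kronL (A : Mat2) (b c : Fin 2 → ℂ) (ψ : Vec4) :
    (A ⊗ₖ vecMulVec b c) *ᵥ ψ = tp (fun p => ∑ α : Q2, A p α.1 * c α.2 * ψ α) b := by
  ext ⟨p, q⟩
  simp only [mulVec, dotProduct, tp, kroneckerMap_apply, vecMulVec_apply,
    Finset.sum_mul]
  exact Finset.sum_congr rfl fun a _ => by ring

lemma kronR (a c : Fin 2 → ℂ) (B : Mat2) (ψ : Vec4) :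
    (vecMulVec a c ⊗ₖ B) *ᵥ ψ = tp a (fun q => ∑ α : Q2, c α.1 * B q α.2 * ψ α) := by
  ext ⟨p, q⟩
  simp only [mulVec, dotProduct, tp, kroneckerMap_apply, vecMulVec_apply,
    Finset.mul_sum]
  exact Finset.sum_congr rfl fun a _ => by ring

lemma ketBra_tp (x y : Fin 2 → ℂ) :
    ketBra (tp x y) (tp x y) = vecMulVec x (star x) ⊗ₖ vecMulVec y (star y) := by
  ext ⟨p, q⟩ ⟨r, s⟩
  simp only [ketBra, tp, vecMulVec_apply, kroneckerMap_apply, Pi.star_apply, star_mul']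
  ring

lemma perp (m0 m1 y0 y1 : ℂ) (hm : ¬(m0 = 0 ∧ m1 = 0)) (h : m0 * y0 + m1 * y1 = 0) :
    ∃ t, y0 = t * m1 ∧ y1 = -(t * m0) := by
  by_cases hm0 : m0 = 0
  · have hm1 : m1 ≠ 0 := fun h1 => hm ⟨hm0, h1⟩
    refine ⟨y0 / m1, by field_simp, ?_⟩
    have h1 : m1 * y1 = 0 := by rw [hm0] at h; linear_combination h
    simp [hm0, (mul_eq_zero.mp h1).resolve_left hm1]
  · refine ⟨-(y1 / m0), ?_, by field_simp⟩
    field_simp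
    linear_combination h

lemma pair_dep (m0 m1 : ℂ) (y y' : Fin 2 → ℂ) (hm : ¬(m0 = 0 ∧ m1 = 0))
    (h : m0 * y 0 + m1 * y 1 = 0) (h' : m0 * y' 0 + m1 * y' 1 = 0) :
    ∃ (b : Fin 2 → ℂ) (t t' : ℂ), (∀ p, y p = t * b p) ∧ (∀ p, y' p = t' * b p) := by
  obtain ⟨t, ht0, ht1⟩ := perp m0 m1 (y 0) (y 1) hm h
  obtain ⟨t', ht0', ht1'⟩ := perp m0 m1 (y' 0) (y' 1) hm h'
  refine ⟨![m1, -m0], t, t', ?_, ?_⟩ <;>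
    rw [Fin.forall_fin_two] <;>
    simp only [Matrix.cons_val_zero, Matrix.cons_val_one, Matrix.head_cons] <;>
    exact ⟨by assumption, by rw [mul_neg]; assumption⟩

lemma dep (k : Fin 4) (x y y' : Fin 2 → ℂ) (hx : ¬(x 0 = 0 ∧ x 1 = 0))
    (h : star (bell k) ⬝ᵥ tp x y = 0) (h' : star (bell k) ⬝ᵥ tp x y' = 0) :
    ∃ (b : Fin 2 → ℂ) (t t' : ℂ), (∀ p, y p = t * b p) ∧ (∀ p, y' p = t' * b p) := by
  fin_cases k <;>
    simp [bell, ket, tp, dotProduct, Fintype.sum_prod_type, Fin.sum_univ_two,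
      Prod.ext_iff, Complex.star_def, Complex.conj_ofReal] at h h'
  · exact pair_dep (x 0) (x 1) y y' hx
      (by apply mul_left_cancel₀ s_ne; rw [mul_zero]; linear_combination h)
      (by apply mul_left_cancel₀ s_ne; rw [mul_zero]; linear_combination h')
  · refine pair_dep (x 0) (-(x 1)) y y' (fun hh => hx ⟨hh.1, by simpa using hh.2⟩) ?_ ?_
    · apply mul_left_cancel₀ s_ne; rw [mul_zero]; linear_combination h
    · apply mul_left_cancel₀ s_ne; rw [mul_zero]; linear_combination h'
  · refine pair_dep (x 1) (x 0) y y' (fun hh => hx ⟨hh.2, hh.1⟩) ?_ ?_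
    · apply mul_left_cancel₀ s_ne; rw [mul_zero]; linear_combination h
    · apply mul_left_cancel₀ s_ne; rw [mul_zero]; linear_combination h'
  · refine pair_dep (x 1) (-(x 0)) y y' (fun hh => hx ⟨by simpa using hh.2, hh.1⟩) ?_ ?_
    · apply mul_left_cancel₀ s_ne; rw [mul_zero]; linear_combination h
    · apply mul_left_cancel₀ s_ne; rw [mul_zero]; linear_combination h'

/-- squared norm -/
def nsq (u : Fin 2 → ℂ) : ℝ := ∑ x, Complex.normSq (u x)

/-- normalization (or |0⟩ if u = 0) -/
def nu (u : Fin 2 → ℂ) : Fin 2 → ℂ :=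
  if u = 0 then (fun j => if j = 0 then 1 else 0) else ((Real.sqrt (nsq u) : ℂ))⁻¹ • u

lemma nsq_nonneg (u : Fin 2 → ℂ) : 0 ≤ nsq u :=
  Finset.sum_nonneg fun _ _ => Complex.normSq_nonneg _

lemma nsq_pos (u : Fin 2 → ℂ) (hu : u ≠ 0) : 0 < nsq u := by
  rcases (nsq_nonneg u).lt_or_eq with h | h
  · exact h
  · exfalso; apply hu; funext x
    have := (Finset.sum_eq_zero_iff_of_nonneg (fun i _ => Complex.normSq_nonneg (u i))).mp h.symm
    simpa [Complex.normSq_eq_zero] using this x (Finset.mem_univ x)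

lemma nu_unit (u : Fin 2 → ℂ) : IsUnitVec (nu u) := by
  unfold nu IsUnitVec
  by_cases hu : u = 0
  · simp [hu, Fin.sum_univ_two]
  · have hS := nsq_pos u hu
    simp only [if_neg hu, Pi.smul_apply, smul_eq_mul, Complex.normSq_mul]
    rw [← Finset.mul_sum]
    have : Complex.normSq ((Real.sqrt (nsq u) : ℂ))⁻¹ = (nsq u)⁻¹ := by
      rw [map_inv₀, Complex.normSq_ofReal, Real.mul_self_sqrt hS.le]
    rw [this]
    exact inv_mul_cancel₀ (ne_of_gt hS)

lemma vmv_smul (r : ℂ) (u : Fin 2 → ℂ) :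
    vecMulVec (r • u) (star (r • u)) = (r * (starRingEnd ℂ) r) • vecMulVec u (star u) := by
  ext p q
  simp only [vecMulVec_apply, Pi.smul_apply, Pi.star_apply, smul_eq_mul, star_mul',
    Matrix.smul_apply, Complex.star_def]
  ring

lemma vmv_normalize (u : Fin 2 → ℂ) :
    vecMulVec u (star u) = ((nsq u : ℝ) : ℂ) • vecMulVec (nu u) (star (nu u)) := by
  by_cases hu : u = 0
  · subst hu
    have h0 : nsq (0 : Fin 2 → ℂ) = 0 := by simp [nsq]
    ext p q
    simp [vecMulVec_apply, h0]
  · have hS := nsq_pos u hu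
    rw [nu, if_neg hu, vmv_smul]
    rw [smul_smul]
    have : (((Real.sqrt (nsq u) : ℂ))⁻¹ * (starRingEnd ℂ) ((Real.sqrt (nsq u) : ℂ))⁻¹)
        = ((nsq u : ℝ) : ℂ)⁻¹ := by
      rw [map_inv₀, Complex.conj_ofReal, ← mul_inv, ← Complex.ofReal_mul,
        Real.mul_self_sqrt hS.le]
    rw [this, mul_inv_cancel₀ (by exact_mod_cast ne_of_gt hS), one_smul]

lemma trace_vmv (u : Fin 2 → ℂ) :
    (vecMulVec u (star u)).trace = ((nsq u : ℝ) : ℂ) := by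
  simp [trace, vecMulVec_apply, diag, nsq, Pi.star_apply, Complex.mul_conj,
    Complex.star_def]

lemma sepState_of_cone {ι : Type} [Fintype ι] (ρ : Mat4) (htr : ρ.trace = 1)
    (c : ι → ℝ) (hc : ∀ i, 0 ≤ c i) (u v : ι → Fin 2 → ℂ)
    (hρ : ρ = ∑ i, (c i : ℂ) • (vecMulVec (u i) (star (u i)) ⊗ₖ vecMulVec (v i) (star (v i)))) :
    SepState ρ := by
  classical
  let e := (Fintype.equivFin ι).symm
  refine ⟨Fintype.card ι, fun j => c (e j) * (nsq (u (e j)) * nsq (v (e j))),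
    fun j => nu (u (e j)), fun j => nu (v (e j)),
    fun j => mul_nonneg (hc _) (mul_nonneg (nsq_nonneg _) (nsq_nonneg _)), ?_,
    fun j => nu_unit _, fun j => nu_unit _, ?_⟩
  · have h1 : ρ.trace = ((∑ i, c i * (nsq (u i) * nsq (v i)) : ℝ) : ℂ) := by
      rw [hρ, trace_sum]
      push_cast
      refine Finset.sum_congr rfl fun i _ => ?_
      rw [trace_smul, trace_kronecker, trace_vmv, trace_vmv, smul_eq_mul]
    rw [htr] at h1
    have h2 : (∑ i, c i * (nsq (u i) * nsq (v i)) : ℝ) = 1 := by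
      exact_mod_cast h1.symm
    rw [← h2]
    exact (Equiv.sum_comp e fun i => c i * (nsq (u i) * nsq (v i)))
  · rw [hρ, ← Equiv.sum_comp e]
    refine Finset.sum_congr rfl fun j _ => ?_
    rw [vmv_normalize (u (e j)), vmv_normalize (v (e j)), Matrix.smul_kronecker,
      Matrix.kronecker_smul, smul_smul, smul_smul]
    push_cast; ring_nf

lemma sum_mulVec' {ι : Type*} (s : Finset ι) (f : ι → Mat4) (v : Vec4) :
    (∑ i ∈ s, f i) *ᵥ v = ∑ i ∈ s, f i *ᵥ v := by
  ext p
  simp only [mulVec, dotProduct, Finset.sum_apply, Matrix.sum_apply, Finset.sum_mul]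
  exact Finset.sum_comm

lemma dot_sum' {ι : Type*} (s : Finset ι) (v : Vec4) (f : ι → Vec4) :
    v ⬝ᵥ (∑ i ∈ s, f i) = ∑ i ∈ s, v ⬝ᵥ f i := by
  simp only [dotProduct, Finset.sum_apply, Finset.mul_sum]
  exact Finset.sum_comm

lemma mems_decomp (l1 l2 l3 : ℝ) :
    mems l1 l2 l3 0 = ∑ j : Fin 3, ((![l1, l2, l3] j : ℝ) : ℂ) •
      ketBra (![bell 0, ket 0 1, bell 1] j) (![bell 0, ket 0 1, bell 1] j) := by
  simp [mems, bellProj, Fin.sum_univ_three]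

theorem no_SEP_to_rank3_bell_diagonal (l1 l2 l3 : ℝ)
    (h12 : l2 ≤ l1) (h23 : l3 ≤ l2) (h3 : 0 < l3) (hsum : l1 + l2 + l3 = 1)
    (p : Fin 4 → ℝ) (hpsum : ∑ i, p i = 1)
    (hrank3 : ∃ i, p i = 0 ∧ ∀ j, j ≠ i → 0 < p j)
    (hent : ¬ SepState (∑ i, (p i : ℂ) • bellProj i)) :
    ¬ ∃ T : Mat4 → Mat4, IsSEP T ∧ T (mems l1 l2 l3 0) = ∑ i, (p i : ℂ) • bellProj i := by
  rintro ⟨T, ⟨k, A, B, hTP, hT⟩, hEq⟩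
  obtain ⟨i₀, hp0, hppos⟩ := hrank3
  set w : Vec4 := bell i₀ with hw
  set L : Fin 3 → ℝ := ![l1, l2, l3] with hL
  set Ψ : Fin 3 → Vec4 := ![bell 0, ket 0 1, bell 1] with hΨ
  have hLpos : ∀ j : Fin 3, 0 < L j := by
    intro j
    fin_cases j
    · exact lt_of_lt_of_le (lt_of_lt_of_le h3 h23) h12
    · exact lt_of_lt_of_le h3 h23
    · exact h3
  have hσ : ∑ i, (A i ⊗ₖ B i) * mems l1 l2 l3 0 * (A i ⊗ₖ B i)ᴴ
      = ∑ i, (p i : ℂ) • bellProj i := by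
    rw [← hT]; exact hEq
  -- the quadratic form of σ at w vanishes
  have hQ : star w ⬝ᵥ ((∑ i, (p i : ℂ) • bellProj i) *ᵥ w) = 0 := by
    rw [sum_mulVec', dot_sum']
    have hterm : ∀ j : Fin 4, star w ⬝ᵥ (((p j : ℂ) • bellProj j) *ᵥ w)
        = if j = i₀ then (p j : ℂ) else 0 := by
      intro j
      rw [Matrix.smul_mulVec, dotProduct_smul, bellProj, ketBra_mulVec,
        dotProduct_smul, hw, bell_ortho, bell_ortho]
      by_cases h : j = i₀
      · simp [h]
      · simp [h, fun hh : i₀ = j => h hh.symm]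
    simp only [hterm]
    rw [Finset.sum_ite_eq' Finset.univ i₀ (fun j => (p j : ℂ))]
    simp [hp0]
  -- each Kraus term expansion
  have hKraus : ∀ i : Fin k, (A i ⊗ₖ B i) * mems l1 l2 l3 0 * (A i ⊗ₖ B i)ᴴ
      = ∑ j : Fin 3, ((L j : ℝ) : ℂ) •
          ketBra ((A i ⊗ₖ B i) *ᵥ Ψ j) ((A i ⊗ₖ B i) *ᵥ Ψ j) := by
    intro i
    rw [mems_decomp, Matrix.mul_sum, Matrix.sum_mul]
    exact Finset.sum_congr rfl fun j _ => by
      rw [mul_smul_comm, smul_mul_assoc, mul_ketBra_mul]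
  -- all the inner products vanish
  have hC : ∀ (i : Fin k) (j : Fin 3), star w ⬝ᵥ ((A i ⊗ₖ B i) *ᵥ Ψ j) = 0 := by
    have hsum0 : ∑ i : Fin k, ∑ j : Fin 3,
        L j * Complex.normSq (star w ⬝ᵥ ((A i ⊗ₖ B i) *ᵥ Ψ j)) = 0 := by
      have h0 := hQ
      rw [← hσ, sum_mulVec', dot_sum'] at h0
      have he : ∀ i : Fin k, star w ⬝ᵥ (((A i ⊗ₖ B i) * mems l1 l2 l3 0 * (A i ⊗ₖ B i)ᴴ) *ᵥ w)
          = ((∑ j : Fin 3, L j * Complex.normSq (star w ⬝ᵥ ((A i ⊗ₖ B i) *ᵥ Ψ j)) : ℝ) : ℂ) := by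
        intro i
        rw [hKraus i, sum_mulVec', dot_sum']
        push_cast
        refine Finset.sum_congr rfl fun j _ => ?_
        rw [Matrix.smul_mulVec, dotProduct_smul, dot_ketBra, smul_eq_mul]
      rw [Finset.sum_congr rfl (fun i _ => he i)] at h0
      exact_mod_cast h0
    intro i j
    have h1 := (Finset.sum_eq_zero_iff_of_nonneg (fun i _ =>
      Finset.sum_nonneg fun j _ =>
        mul_nonneg (hLpos j).le (Complex.normSq_nonneg _))).mp hsum0 i (Finset.mem_univ i)
    have h2 := (Finset.sum_eq_zero_iff_of_nonneg (fun j _ =>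
      mul_nonneg (hLpos j).le (Complex.normSq_nonneg _))).mp h1 j (Finset.mem_univ j)
    have h3' := (mul_eq_zero.mp h2).resolve_left (ne_of_gt (hLpos j))
    exact Complex.normSq_eq_zero.mp h3'
  -- deduce vanishing on |00⟩ and |01⟩
  have hket : ∀ i : Fin k,
      star w ⬝ᵥ ((A i ⊗ₖ B i) *ᵥ ket 0 0) = 0 ∧
      star w ⬝ᵥ ((A i ⊗ₖ B i) *ᵥ ket 0 1) = 0 := by
    intro i
    have h0 : star w ⬝ᵥ ((A i ⊗ₖ B i) *ᵥ bell 0) = 0 := by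
      have := hC i 0; simpa [hΨ] using this
    have h2 : star w ⬝ᵥ ((A i ⊗ₖ B i) *ᵥ bell 1) = 0 := by
      have := hC i 2; simpa [hΨ] using this
    have h1 : star w ⬝ᵥ ((A i ⊗ₖ B i) *ᵥ ket 0 1) = 0 := by
      have := hC i 1; simpa [hΨ] using this
    refine ⟨?_, h1⟩
    have hb : bell 0 + bell 1 = (2 * (Real.sqrt 2 : ℂ)⁻¹) • ket 0 0 := by
      funext pq
      obtain ⟨pi, qi⟩ := pq
      fin_cases pi <;> fin_cases qi <;>
        simp [bell, ket, Prod.ext_iff] <;> ring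
    have hadd : star w ⬝ᵥ ((A i ⊗ₖ B i) *ᵥ (bell 0 + bell 1)) = 0 := by
      rw [mulVec_add, dotProduct_add, h0, h2, add_zero]
    rw [hb, mulVec_smul, dotProduct_smul, smul_eq_mul, mul_eq_zero] at hadd
    rcases hadd with h | h
    · exact absurd h (mul_ne_zero two_ne_zero s_ne)
    · exact h
  -- each Kraus operator has a rank-one factor
  have hfact : ∀ i : Fin k,
      (∃ a cc : Fin 2 → ℂ, A i = vecMulVec a cc) ∨
      (∃ b cc : Fin 2 → ℂ, B i = vecMulVec b cc) := by
    intro i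
    obtain ⟨h00, h01⟩ := hket i
    rw [kron_mulVec_ket] at h00 h01
    by_cases hx : (A i) 0 0 = 0 ∧ (A i) 1 0 = 0
    · left
      refine ⟨fun p => A i p 1, fun q => if q = 1 then 1 else 0, ?_⟩
      ext p q
      fin_cases q
      · simp only [vecMulVec_apply]
        fin_cases p
        · simpa using hx.1
        · simpa using hx.2
      · simp [vecMulVec_apply]
    · right
      obtain ⟨b, t, t', hy, hy'⟩ := dep i₀ (fun p => A i p 0)
        (fun q => B i q 0) (fun q => B i q 1) hx h00 h01
      refine ⟨b, ![t, t'], ?_⟩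
      ext p q
      fin_cases q
      · simpa [vecMulVec_apply, mul_comm] using hy p
      · simpa [vecMulVec_apply, mul_comm] using hy' p
  -- each Kraus image of each ψ_j is a product vector
  have hprod : ∀ (i : Fin k) (j : Fin 3),
      ∃ x y : Fin 2 → ℂ, (A i ⊗ₖ B i) *ᵥ Ψ j = tp x y := by
    intro i j
    rcases hfact i with ⟨a, cc, hA⟩ | ⟨b, cc, hB⟩
    · rw [hA]; exact ⟨_, _, kronR a cc (B i) (Ψ j)⟩
    · rw [hB]; exact ⟨_, _, kronL (A i) b cc (Ψ j)⟩
  choose x y hxy using hprod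
  -- σ is separable: contradiction
  apply hent
  have htrace : (∑ i, (p i : ℂ) • bellProj i).trace = 1 := by
    rw [trace_sum]
    have hb1 : ∀ j : Fin 4, (bellProj j).trace = 1 := by
      intro j
      have h1 : (bellProj j).trace = star (bell j) ⬝ᵥ bell j := by
        simp only [bellProj, trace, ketBra, diag_apply, dotProduct, Pi.star_apply]
        exact Finset.sum_congr rfl fun q _ => mul_comm _ _
      rw [h1, bell_ortho]
      simp
    calc ∑ j, ((p j : ℂ) • bellProj j).trace = ∑ j, (p j : ℂ) := by
          refine Finset.sum_congr rfl fun j _ => ?_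
          rw [trace_smul, hb1 j, smul_eq_mul, mul_one]
      _ = ((∑ j, p j : ℝ) : ℂ) := by push_cast; rfl
      _ = 1 := by rw [hpsum]; norm_num
  refine sepState_of_cone (ι := Fin k × Fin 3) _ htrace
    (fun ij => L ij.2) (fun ij => (hLpos ij.2).le)
    (fun ij => x ij.1 ij.2) (fun ij => y ij.1 ij.2) ?_
  rw [← hσ, Fintype.sum_prod_type]
  refine Finset.sum_congr rfl fun i _ => ?_
  rw [hKraus i]
  refine Finset.sum_congr rfl fun j _ => ?_
  rw [hxy i j, ketBra_tp]
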